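/- arXiv:2008.01534 — 2 statements merged into one kernel-verified Lean document; each statement's English description precedes it below -/
import Mathlib

section
/- Let (S_t) be a predual quantum dynamical semigroup whose dual maps T_t are each surjective onto B(H), and let C* be its non-empty set of invariant density operators. Then C* is globally asymptotically stable if and only if it is locally asymptotically stable. -/
open Filter ContinuousLinearMap
open scoped Topology

noncomputable section

/-- An abstract model of the Banach space `I₁(H)` of trace-class operators on a complex
separable Hilbert space `H`, sitting inside the algebra `B(H)` of bounded operators.
`IsTraceClass X` says that the bounded operator `X` is trace class, `trace` is (a linear
extension of) the trace, and `norm1` is the trace norm `‖X‖₁ = tr √(X⋆X)`. -/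
structure TraceClassStructure (H : Type*) [NormedAddCommGroup H]
    [InnerProductSpace ℂ H] [CompleteSpace H] [TopologicalSpace.SeparableSpace H] where
  /-- the trace-class operators -/
  IsTraceClass : (H →L[ℂ] H) → Prop
  /-- the trace (a linear functional, defined at least on the trace-class operators) -/
  trace : (H →L[ℂ] H) →ₗ[ℂ] ℂ
  /-- the trace norm `‖X‖₁` -/
  norm1 : (H →L[ℂ] H) → ℝ
  zero_mem : IsTraceClass 0
  add_mem : ∀ {X Y}, IsTraceClass X → IsTraceClass Y → IsTraceClass (X + Y)
  smul_mem : ∀ (c : ℂ) {X}, IsTraceClass X → IsTraceClass (c • X)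
  mul_mem_left : ∀ (A : H →L[ℂ] H) {X}, IsTraceClass X → IsTraceClass (A * X)
  mul_mem_right : ∀ (A : H →L[ℂ] H) {X}, IsTraceClass X → IsTraceClass (X * A)
  sqrt_mem : ∀ {X}, IsTraceClass X → IsTraceClass (CFC.sqrt (star X * X))
  /-- the trace norm is `tr √(X⋆X)` -/
  norm1_def : ∀ {X}, IsTraceClass X → norm1 X = (trace (CFC.sqrt (star X * X))).re
  norm1_nonneg : ∀ X, 0 ≤ norm1 X
  norm1_eq_zero : ∀ {X}, IsTraceClass X → (norm1 X = 0 ↔ X = 0)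
  norm1_add_le : ∀ X Y, norm1 (X + Y) ≤ norm1 X + norm1 Y
  norm1_smul : ∀ (c : ℂ) (X), norm1 (c • X) = ‖c‖ * norm1 X
  /-- the operators in `B(H)` act as continuous linear functionals on `I₁(H)` via the trace -/
  trace_mul_le : ∀ {X} (A : H →L[ℂ] H), IsTraceClass X → ‖trace (X * A)‖ ≤ ‖A‖ * norm1 X
  /-- `(I₁(H), ‖·‖₁)` is a Banach space: every `‖·‖₁`-Cauchy sequence of trace-class
  operators converges in trace norm to a trace-class operator -/
  complete : ∀ f : ℕ → (H →L[ℂ] H), (∀ n, IsTraceClass (f n)) →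
    (∀ ε : ℝ, 0 < ε → ∃ N, ∀ m ≥ N, ∀ n ≥ N, norm1 (f m - f n) < ε) →
    ∃ X, IsTraceClass X ∧ Tendsto (fun n => norm1 (f n - X)) atTop (𝓝 0)

variable {H : Type*} [NormedAddCommGroup H] [InnerProductSpace ℂ H] [CompleteSpace H]
  [TopologicalSpace.SeparableSpace H]

namespace TraceClassStructure

/-- A density operator: a positive trace-class operator of unit trace. -/
def IsDensityOp (τ : TraceClassStructure H) (ρ : H →L[ℂ] H) : Prop :=
  τ.IsTraceClass ρ ∧ ρ.IsPositive ∧ τ.trace ρ = 1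

/-- The set `S(H)` of density operators. -/
def densityOps (τ : TraceClassStructure H) : Set (H →L[ℂ] H) := {ρ | τ.IsDensityOp ρ}

/-- The trace-norm distance `d(σ, C) = inf_{ρ ∈ C} ‖σ - ρ‖₁` from a point to a set. -/
def dist1 (τ : TraceClassStructure H) (σ : H →L[ℂ] H) (C : Set (H →L[ℂ] H)) : ℝ :=
  ⨅ ρ : C, τ.norm1 (σ - ρ)

/-- `N` is a neighborhood (inside `S(H)`) of the subset `C` of `S(H)`. -/
def IsNbhdOf (τ : TraceClassStructure H) (N C : Set (H →L[ℂ] H)) : Prop :=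
  N ⊆ τ.densityOps ∧ C ⊆ N ∧
    ∃ ε : ℝ, 0 < ε ∧ {ρ | τ.IsDensityOp ρ ∧ τ.dist1 ρ C ≤ ε} ⊆ N

/-- The weak topology `σ(I₁(H), B(H))` (restricted from `B(H)`): the coarsest topology
making every functional `X ↦ tr(X A)`, `A ∈ B(H)`, continuous. -/
def weakTop (τ : TraceClassStructure H) : TopologicalSpace (H →L[ℂ] H) :=
  ⨅ A : H →L[ℂ] H, TopologicalSpace.induced (fun X => τ.trace (X * A)) inferInstance

end TraceClassStructure

/-- A self-adjoint bounded operator with strictly increasing spectrum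
`A = Σ_i p_i P_i`, `p_0 < p_1 < ⋯`, with the `P_i` nonzero pairwise-orthogonal
orthogonal projections summing strongly to `1`.  The index set `I` is a lower
set of `ℕ` containing `0` (so it is `{0, …, k-1}` or all of `ℕ`). -/
structure StrictlyIncreasingSpectrum (A : H →L[ℂ] H) where
  I : Set ℕ
  p : ℕ → ℝ
  P : ℕ → (H →L[ℂ] H)
  I_lower : ∀ {m n : ℕ}, m ≤ n → n ∈ I → m ∈ I
  zero_mem : 0 ∈ I
  proj_selfAdjoint : ∀ i ∈ I, IsSelfAdjoint (P i)
  proj_idem : ∀ i ∈ I, P i * P i = P i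
  proj_ne_zero : ∀ i ∈ I, P i ≠ 0
  proj_orth : ∀ i ∈ I, ∀ j ∈ I, i ≠ j → P i * P j = 0
  p_strictMono : ∀ i ∈ I, ∀ j ∈ I, i < j → p i < p j
  /-- `Σ_i P_i = 1` in the strong operator topology -/
  hasSum_proj : ∀ x : H, HasSum (fun i : I => P i x) x
  /-- `A = Σ_i p_i P_i` in the strong operator topology -/
  hasSum_eq : ∀ x : H, HasSum (fun i : I => p i • P i x) (A x)

/-- A predual quantum dynamical semigroup on `H`: a semigroup `(S_t)_{t ≥ 0}` of bounded
linear maps on `I₁(H)` mapping density operators to density operators, together with the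
dual semigroup `(T_t)_{t ≥ 0}` of bounded linear maps on `B(H)` satisfying
`tr(S_t(ρ) A) = tr(ρ T_t(A))`. -/
structure PredualQDS (H : Type*) [NormedAddCommGroup H] [InnerProductSpace ℂ H]
    [CompleteSpace H] [TopologicalSpace.SeparableSpace H]
    (τ : TraceClassStructure H) where
  S : ℝ → (H →L[ℂ] H) →ₗ[ℂ] (H →L[ℂ] H)
  T : ℝ → (H →L[ℂ] H) →L[ℂ] (H →L[ℂ] H)
  S_mapsTraceClass : ∀ t, 0 ≤ t → ∀ {X}, τ.IsTraceClass X → τ.IsTraceClass (S t X)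
  S_bounded : ∀ t, 0 ≤ t → ∃ c : ℝ, ∀ X, τ.IsTraceClass X → τ.norm1 (S t X) ≤ c * τ.norm1 X
  S_zero : S 0 = LinearMap.id
  S_semigroup : ∀ s t : ℝ, 0 ≤ s → 0 ≤ t → ∀ X, S (t + s) X = S t (S s X)
  S_mapsDensity : ∀ t, 0 ≤ t → ∀ {ρ}, τ.IsDensityOp ρ → τ.IsDensityOp (S t ρ)
  /-- duality: `tr(S_t(ρ) A) = tr(ρ T_t(A))` -/
  duality : ∀ t, 0 ≤ t → ∀ ρ A, τ.IsTraceClass ρ →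
    τ.trace (S t ρ * A) = τ.trace (ρ * T t A)

namespace PredualQDS

variable {τ : TraceClassStructure H}

/-- The set `C*` of invariant density operators of the semigroup. -/
def invariantDensityOps (Q : PredualQDS H τ) : Set (H →L[ℂ] H) :=
  {ρ | τ.IsDensityOp ρ ∧ ∀ t : ℝ, 0 ≤ t → Q.S t ρ = ρ}

/-- `LV` is the generator of the (Lyapunov) observable `V` along the semigroup:
for every density operator `ρ`, `t ↦ tr(V S_t(ρ))` is differentiable on `[0, ∞)`
with derivative `tr(L(V) S_t(ρ))`. -/
def IsGenerator (Q : PredualQDS H τ) (V LV : H →L[ℂ] H) : Prop :=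
  ∀ ρ, τ.IsDensityOp ρ → ∀ t : ℝ, 0 ≤ t →
    HasDerivWithinAt (fun s : ℝ => τ.trace (V * Q.S s ρ))
      (τ.trace (LV * Q.S t ρ)) (Set.Ici 0) t

/-- Lyapunov stability of a set `C` of density operators. -/
def LyapunovStable (Q : PredualQDS H τ) (C : Set (H →L[ℂ] H)) : Prop :=
  ∀ ε : ℝ, 0 < ε → ∃ δ : ℝ, 0 < δ ∧ ∀ ρ, τ.IsDensityOp ρ → τ.dist1 ρ C < δ →
    ∀ t : ℝ, 0 ≤ t → τ.dist1 (Q.S t ρ) C < ε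

/-- Local asymptotic stability of a set `C` of density operators. -/
def LocallyAsymptoticallyStable (Q : PredualQDS H τ) (C : Set (H →L[ℂ] H)) : Prop :=
  Q.LyapunovStable C ∧ ∃ δ : ℝ, 0 < δ ∧ ∀ ρ, τ.IsDensityOp ρ → τ.dist1 ρ C < δ →
    Tendsto (fun t : ℝ => τ.dist1 (Q.S t ρ) C) atTop (𝓝 0)

/-- Global asymptotic stability of a set `C` of density operators. -/
def GloballyAsymptoticallyStable (Q : PredualQDS H τ) (C : Set (H →L[ℂ] H)) : Prop :=
  Q.LyapunovStable C ∧ ∀ ρ, τ.IsDensityOp ρ →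
    Tendsto (fun t : ℝ => τ.dist1 (Q.S t ρ) C) atTop (𝓝 0)

/-- A set `M` is invariant w.r.t. the semigroup: if a trajectory of a density operator
is in `M` at some time `t ≥ 0` then it stays in `M` for all later times. -/
def IsInvariantSet (Q : PredualQDS H τ) (M : Set (H →L[ℂ] H)) : Prop :=
  ∀ ρ, τ.IsDensityOp ρ → ∀ t : ℝ, 0 ≤ t → Q.S t ρ ∈ M → ∀ t' : ℝ, t ≤ t' → Q.S t' ρ ∈ M

/-- A set `M` is two-side invariant w.r.t. the semigroup: if a trajectory of a density
operator is in `M` at some time `t ≥ 0` then it is in `M` at every time `t' ≥ 0`. -/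
def IsTwoSideInvariantSet (Q : PredualQDS H τ) (M : Set (H →L[ℂ] H)) : Prop :=
  ∀ ρ, τ.IsDensityOp ρ → ∀ t : ℝ, 0 ≤ t → Q.S t ρ ∈ M → ∀ t' : ℝ, 0 ≤ t' → Q.S t' ρ ∈ M

/-- The positive limit set `M⁺` of the trajectory `ρ_t = S_t(ρ)`: all weak limits of
`S_{t_n}(ρ)` along monotonically increasing sequences of times `t_n → ∞`. -/
def posLimitSet (Q : PredualQDS H τ) (ρ : H →L[ℂ] H) : Set (H →L[ℂ] H) :=
  {σ | τ.IsDensityOp σ ∧ ∃ t : ℕ → ℝ, StrictMono t ∧ (∀ n, 0 ≤ t n) ∧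
    Tendsto t atTop atTop ∧
    ∀ A : H →L[ℂ] H,
      Tendsto (fun n => τ.trace (Q.S (t n) ρ * A)) atTop (𝓝 (τ.trace (σ * A)))}

/-- The trajectory `S_t(ρ)` converges weakly to the set `M` as `t → ∞`. -/
def WeaklyConvergesTo (Q : PredualQDS H τ) (ρ : H →L[ℂ] H) (M : Set (H →L[ℂ] H)) : Prop :=
  ∀ A : H →L[ℂ] H,
    Tendsto (fun t : ℝ => ⨅ σ : M, ‖τ.trace ((Q.S t ρ - σ) * A)‖) atTop (𝓝 0)

end PredualQDS

open TraceClassStructure PredualQDS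


set_option maxHeartbeats 1000000
set_option linter.unusedSectionVars false
set_option synthInstance.maxHeartbeats 1000000

section StabilityHelpers

variable {τ : TraceClassStructure H}

lemma real_smul_isSelfAdjoint' {T : H →L[ℂ] H} (hT : IsSelfAdjoint T) (r : ℝ) :
    IsSelfAdjoint ((r : ℂ) • T) := by
  rw [IsSelfAdjoint, star_smul, Complex.star_def, Complex.conj_ofReal, hT.star_eq]

lemma real_smul_isPositive' {T : H →L[ℂ] H} (hT : T.IsPositive) {c : ℝ} (hc : 0 ≤ c) :
    ((c : ℂ) • T).IsPositive := by
  refine ⟨ContinuousLinearMap.isSelfAdjoint_iff_isSymmetric.mp (real_smul_isSelfAdjoint' hT.isSelfAdjoint c), fun x => ?_⟩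
  have h2 : ((c : ℂ) • T).reApplyInnerSelf x = c * T.reApplyInnerSelf x := by
    simp only [reApplyInnerSelf, smul_apply, inner_smul_left, Complex.conj_ofReal]
    exact Complex.re_ofReal_mul c _
  rw [h2]
  exact mul_nonneg hc (hT.2 x)

lemma sqrt_star_mul_self_of_isPositive' {Y : H →L[ℂ] H} (hY : Y.IsPositive) :
    CFC.sqrt (star Y * Y) = Y := by
  rw [hY.isSelfAdjoint.star_eq]
  exact CFC.sqrt_mul_self Y ((nonneg_iff_isPositive Y).mpr hY)

lemma sqrt_star_mul_self_of_isSelfAdjoint' {X : H →L[ℂ] H} (hX : IsSelfAdjoint X) :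
    CFC.sqrt (star X * X) = X⁺ + X⁻ := by
  rw [hX.star_eq]
  refine CFC.sqrt_unique ?_ (add_nonneg (CFC.posPart_nonneg X) (CFC.negPart_nonneg X))
  have h1 : X⁺ * X⁻ = 0 := CFC.posPart_mul_negPart X
  have h2 : X⁻ * X⁺ = 0 := CFC.negPart_mul_posPart X
  have h3 : X⁺ - X⁻ = X := CFC.posPart_sub_negPart X hX
  calc (X⁺ + X⁻) * (X⁺ + X⁻)
      = (X⁺ - X⁻) * (X⁺ - X⁻) + (X⁺*X⁻ + X⁻*X⁺) + (X⁺*X⁻ + X⁻*X⁺) := by noncomm_ring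
  _ = X * X := by rw [h1, h2, h3]; simp

namespace TraceClassStructure

lemma neg_mem' {X : H →L[ℂ] H} (h : τ.IsTraceClass X) : τ.IsTraceClass (-X) := by
  have := τ.smul_mem (-1) h
  rwa [neg_one_smul] at this

lemma sub_mem' {X Y : H →L[ℂ] H} (hX : τ.IsTraceClass X) (hY : τ.IsTraceClass Y) :
    τ.IsTraceClass (X - Y) := by
  rw [sub_eq_add_neg]; exact τ.add_mem hX (neg_mem' hY)

lemma norm1_zero' : τ.norm1 0 = 0 := by
  have := τ.norm1_smul 0 0
  simpa using this

lemma norm1_neg' (X : H →L[ℂ] H) : τ.norm1 (-X) = τ.norm1 X := by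
  have := τ.norm1_smul (-1) X
  rw [neg_one_smul] at this
  simpa using this

lemma norm1_sub_le' (X Y : H →L[ℂ] H) : τ.norm1 (X - Y) ≤ τ.norm1 X + τ.norm1 Y := by
  rw [sub_eq_add_neg]
  exact (τ.norm1_add_le X (-Y)).trans (by rw [norm1_neg'])

lemma norm1_sub_comm' (X Y : H →L[ℂ] H) : τ.norm1 (X - Y) = τ.norm1 (Y - X) := by
  rw [← norm1_neg' (X - Y), neg_sub]

lemma norm1_triangle' (X Y Z : H →L[ℂ] H) :
    τ.norm1 (X - Z) ≤ τ.norm1 (X - Y) + τ.norm1 (Y - Z) := by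
  have := τ.norm1_add_le (X - Y) (Y - Z)
  rwa [sub_add_sub_cancel] at this

lemma norm1_of_isPositive {Y : H →L[ℂ] H} (htc : τ.IsTraceClass Y) (hY : Y.IsPositive) :
    τ.norm1 Y = (τ.trace Y).re := by
  rw [τ.norm1_def htc, sqrt_star_mul_self_of_isPositive' hY]

lemma trace_re_nonneg' {Y : H →L[ℂ] H} (htc : τ.IsTraceClass Y) (hY : Y.IsPositive) :
    0 ≤ (τ.trace Y).re := by
  rw [← norm1_of_isPositive htc hY]; exact τ.norm1_nonneg Y

lemma trace_eq_re {Y : H →L[ℂ] H} (htc : τ.IsTraceClass Y) (hY : Y.IsPositive) :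
    τ.trace Y = (((τ.trace Y).re : ℝ) : ℂ) := by
  have hb : ‖τ.trace (Y * 1)‖ ≤ ‖(1 : H →L[ℂ] H)‖ * τ.norm1 Y := τ.trace_mul_le 1 htc
  rw [mul_one] at hb
  have h1 : ‖(1 : H →L[ℂ] H)‖ ≤ 1 := by
    rw [ContinuousLinearMap.one_def]; exact norm_id_le
  have hb2 : ‖τ.trace Y‖ ≤ τ.norm1 Y := by
    calc ‖τ.trace Y‖ ≤ ‖(1 : H →L[ℂ] H)‖ * τ.norm1 Y := hb
    _ ≤ 1 * τ.norm1 Y := by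
        exact mul_le_mul_of_nonneg_right h1 (τ.norm1_nonneg Y)
    _ = τ.norm1 Y := one_mul _
  rw [norm1_of_isPositive htc hY] at hb2
  set z := τ.trace Y with hz
  have habs : ‖z‖ ≤ z.re := hb2
  have hre : z.re ≤ ‖z‖ := Complex.re_le_norm z
  have hsq : (‖z‖) ^ 2 = z.re ^ 2 + z.im ^ 2 := by
    rw [Complex.sq_norm, Complex.normSq_apply]; ring
  have him : z.im = 0 := by nlinarith [norm_nonneg z]
  apply Complex.ext
  · simp
  · simp [him]

lemma density_norm1 {ρ : H →L[ℂ] H} (h : τ.IsDensityOp ρ) : τ.norm1 ρ = 1 := by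
  rw [norm1_of_isPositive h.1 h.2.1, h.2.2]
  simp

lemma dist1_nonneg' (σ : H →L[ℂ] H) (C : Set (H →L[ℂ] H)) : 0 ≤ τ.dist1 σ C :=
  Real.iInf_nonneg (fun _ => τ.norm1_nonneg _)

lemma dist1_le_of_mem {μ : H →L[ℂ] H} {C : Set (H →L[ℂ] H)} (h : μ ∈ C)
    (σ : H →L[ℂ] H) : τ.dist1 σ C ≤ τ.norm1 (σ - μ) :=
  ciInf_le ⟨0, by rintro _ ⟨ρ, rfl⟩; exact τ.norm1_nonneg _⟩ (⟨μ, h⟩ : C)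

lemma exists_mem_dist1_lt {C : Set (H →L[ℂ] H)} (hC : C.Nonempty) (σ : H →L[ℂ] H)
    {ε : ℝ} (hε : 0 < ε) : ∃ μ ∈ C, τ.norm1 (σ - μ) < τ.dist1 σ C + ε := by
  by_contra h
  push_neg at h
  haveI : Nonempty C := hC.to_subtype
  have : τ.dist1 σ C + ε ≤ τ.dist1 σ C :=
    le_ciInf (fun μ => h μ.1 μ.2)
  linarith

lemma mix_isDensityOp {ν ρ : H →L[ℂ] H} (hν : τ.IsDensityOp ν) (hρ : τ.IsDensityOp ρ)
    {l : ℝ} (h0 : 0 ≤ l) (h1 : l ≤ 1) :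
    τ.IsDensityOp (((1 - l : ℝ) : ℂ) • ν + ((l : ℝ) : ℂ) • ρ) := by
  refine ⟨τ.add_mem (τ.smul_mem _ hν.1) (τ.smul_mem _ hρ.1), ?_, ?_⟩
  · exact (real_smul_isPositive' hν.2.1 (by linarith)).add (real_smul_isPositive' hρ.2.1 h0)
  · rw [map_add, map_smul, map_smul, hν.2.2, hρ.2.2, smul_eq_mul, smul_eq_mul]
    push_cast
    ring

end TraceClassStructure

end StabilityHelpers

section SemigroupHelpers

open TraceClassStructure

variable {τ : TraceClassStructure H} {Q : PredualQDS H τ}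

lemma PredualQDS.norm1_S_of_isPositive {t : ℝ} (ht : 0 ≤ t) {Y : H →L[ℂ] H}
    (htc : τ.IsTraceClass Y) (hY : Y.IsPositive) :
    τ.norm1 (Q.S t Y) = (τ.trace Y).re := by
  rcases (trace_re_nonneg' htc hY).eq_or_lt with h0 | hpos
  · -- trace is 0, so Y = 0
    have hY0 : Y = 0 := by
      have : τ.norm1 Y = 0 := by rw [norm1_of_isPositive htc hY, ← h0]
      exact (τ.norm1_eq_zero htc).mp this
    rw [hY0, map_zero, norm1_zero']
    simp
  · -- trace is positive
    set r := (τ.trace Y).re with hr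
    have hψ : τ.IsDensityOp (((r⁻¹ : ℝ) : ℂ) • Y) := by
      refine ⟨τ.smul_mem _ htc, real_smul_isPositive' hY (by positivity), ?_⟩
      rw [map_smul, smul_eq_mul, trace_eq_re htc hY, ← hr, ← Complex.ofReal_mul,
        inv_mul_cancel₀ hpos.ne']
      simp
    have hYeq : Y = ((r : ℝ) : ℂ) • (((r⁻¹ : ℝ) : ℂ) • Y) := by
      rw [smul_smul, ← Complex.ofReal_mul, mul_inv_cancel₀ hpos.ne']
      simp
    have hSden := Q.S_mapsDensity t ht hψ
    calc τ.norm1 (Q.S t Y) = τ.norm1 (((r : ℝ) : ℂ) • Q.S t (((r⁻¹ : ℝ) : ℂ) • Y)) := by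
          rw [← map_smul, ← hYeq]
    _ = ‖((r : ℝ) : ℂ)‖ * τ.norm1 (Q.S t (((r⁻¹ : ℝ) : ℂ) • Y)) := τ.norm1_smul _ _
    _ = r := by
          rw [density_norm1 hSden, mul_one, Complex.norm_real, Real.norm_eq_abs,
            abs_of_pos hpos]

lemma PredualQDS.norm1_S_le {t : ℝ} (ht : 0 ≤ t) {X : H →L[ℂ] H}
    (htc : τ.IsTraceClass X) (hX : IsSelfAdjoint X) :
    τ.norm1 (Q.S t X) ≤ τ.norm1 X := by
  set M := CFC.sqrt (star X * X) with hMdef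
  have htcM : τ.IsTraceClass M := τ.sqrt_mem htc
  have hM : M = X⁺ + X⁻ := sqrt_star_mul_self_of_isSelfAdjoint' hX
  have hPN : X⁺ - X⁻ = X := CFC.posPart_sub_negPart X hX
  have hMX : M + X = X⁺ + X⁻ + (X⁺ - X⁻) := by rw [hM, hPN]
  have hPeq : (1/2 : ℂ) • (M + X) = X⁺ := by rw [hMX]; module
  have htcP : τ.IsTraceClass (X⁺) := hPeq ▸ τ.smul_mem _ (τ.add_mem htcM htc)
  have hPX : X⁺ = X + X⁻ := eq_add_of_sub_eq hPN
  have hNeq : X⁻ = X⁺ - X := by rw [hPX]; abel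
  have htcN : τ.IsTraceClass (X⁻) := hNeq ▸ sub_mem' htcP htc
  have hPpos : (X⁺ : H →L[ℂ] H).IsPositive := (nonneg_iff_isPositive _).mp (CFC.posPart_nonneg X)
  have hNpos : (X⁻ : H →L[ℂ] H).IsPositive := (nonneg_iff_isPositive _).mp (CFC.negPart_nonneg X)
  calc τ.norm1 (Q.S t X) = τ.norm1 (Q.S t (X⁺) - Q.S t (X⁻)) := by rw [← map_sub, hPN]
  _ ≤ τ.norm1 (Q.S t (X⁺)) + τ.norm1 (Q.S t (X⁻)) := norm1_sub_le' _ _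
  _ = (τ.trace (X⁺)).re + (τ.trace (X⁻)).re := by
      rw [PredualQDS.norm1_S_of_isPositive ht htcP hPpos,
        PredualQDS.norm1_S_of_isPositive ht htcN hNpos]
  _ = (τ.trace M).re := by rw [hM, map_add, Complex.add_re]
  _ = τ.norm1 X := (τ.norm1_def htc).symm

end SemigroupHelpers

theorem stmt9 (τ : TraceClassStructure H) (Q : PredualQDS H τ)
    (hsurj : ∀ t : ℝ, 0 ≤ t → Function.Surjective (Q.T t))
    (hne : Q.invariantDensityOps.Nonempty) :
    Q.GloballyAsymptoticallyStable Q.invariantDensityOps ↔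
      Q.LocallyAsymptoticallyStable Q.invariantDensityOps := by
  constructor
  · rintro ⟨hL, hG⟩
    exact ⟨hL, 1, one_pos, fun ρ hρ _ => hG ρ hρ⟩
  · rintro ⟨hLyap, δ, hδpos, hδ⟩
    refine ⟨hLyap, fun ρ hρ => ?_⟩
    obtain ⟨σ, hσC⟩ := hne
    set C := Q.invariantDensityOps with hCdef
    have hσden : τ.IsDensityOp σ := hσC.1
    have hCne : C.Nonempty := ⟨σ, hσC⟩
    set l : ℝ := min (1/2) (δ/8) with hldef
    have hl0 : 0 < l := lt_min (by norm_num) (by linarith)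
    have hl2 : l ≤ 1/2 := min_le_left _ _
    have hlδ : l ≤ δ/8 := min_le_right _ _
    have hl1 : l ≤ 1 := by linarith
    have hlC : ((l : ℝ) : ℂ) ≠ 0 := Complex.ofReal_ne_zero.mpr hl0.ne'
    have hnorml : ‖((l : ℝ) : ℂ)‖ = l := by
      rw [Complex.norm_real, Real.norm_eq_abs, abs_of_pos hl0]
    -- the σ–ρ mixture
    set ρm : H →L[ℂ] H := ((1 - l : ℝ) : ℂ) • σ + ((l : ℝ) : ℂ) • ρ with hρmdef
    have hρmden : τ.IsDensityOp ρm := mix_isDensityOp hσden hρ hl0.le hl1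
    have hmixsub : ρm - σ = ((l : ℝ) : ℂ) • (ρ - σ) := by
      rw [hρmdef]
      match_scalars <;> (push_cast; ring)
    have hρmdist : τ.dist1 ρm C < δ := by
      have h1 : τ.dist1 ρm C ≤ τ.norm1 (ρm - σ) := dist1_le_of_mem hσC _
      rw [hmixsub, τ.norm1_smul, hnorml] at h1
      have h2 : τ.norm1 (ρ - σ) ≤ 2 := by
        have h3 := norm1_sub_le' (τ := τ) ρ σ
        rw [density_norm1 hρ, density_norm1 hσden] at h3
        linarith
      nlinarith
    have hD := hδ ρm hρmden hρmdist
    have hSρm : ∀ t : ℝ, 0 ≤ t →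
        Q.S t ρm = ((1 - l : ℝ) : ℂ) • σ + ((l : ℝ) : ℂ) • Q.S t ρ := by
      intro t ht
      rw [hρmdef, map_add, map_smul, map_smul, hσC.2 t ht]
    have hgnn : ∀ t : ℝ, 0 ≤ τ.dist1 (Q.S t ρ) C := fun t => dist1_nonneg' _ _
    suffices hP : ∀ ε : ℝ, 0 < ε → ε ≤ 1 → ∀ᶠ t in atTop, τ.dist1 (Q.S t ρ) C ≤ ε by
      rw [Metric.tendsto_nhds]
      intro ε hε
      have hmin : 0 < min ε 1 := lt_min hε one_pos
      have hle1 : min ε 1 / 2 ≤ 1 := by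
        have := min_le_right ε 1; linarith
      filter_upwards [hP (min ε 1 / 2) (by positivity) hle1] with t ht
      rw [Real.dist_eq, sub_zero, abs_of_nonneg (hgnn t)]
      have := min_le_left ε 1
      linarith
    intro ε hε hε1
    set ε₁ : ℝ := l * ε / 14 with hε₁def
    have hε₁pos : 0 < ε₁ := by positivity
    have hε₁le1 : ε₁ ≤ 1 := by nlinarith
    -- key contraction step
    have key : ∀ a : ℝ, 0 ≤ a → a ≤ 3 → (∀ᶠ t in atTop, τ.dist1 (Q.S t ρ) C ≤ a) →
        ∀ᶠ t in atTop, τ.dist1 (Q.S t ρ) C ≤ (1 - l) * a + l * ε / 2 := by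
      intro a ha0 ha3 hPa
      have hD' : ∀ᶠ t in atTop, τ.dist1 (Q.S t ρm) C < l * ε₁ := by
        have := Metric.tendsto_nhds.mp hD (l * ε₁) (by positivity)
        filter_upwards [this] with t ht
        rw [Real.dist_eq, sub_zero] at ht
        exact (le_abs_self _).trans_lt ht
      obtain ⟨T₁, hT₁⟩ := eventually_atTop.mp hPa
      obtain ⟨T₂, hT₂⟩ := eventually_atTop.mp hD'
      set T : ℝ := max 0 (max T₁ T₂) with hTdef
      have hT0 : (0:ℝ) ≤ T := le_max_left _ _
      have hTT₁ : T₁ ≤ T := le_trans (le_max_left _ _) (le_max_right _ _)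
      have hTT₂ : T₂ ≤ T := le_trans (le_max_right _ _) (le_max_right _ _)
      obtain ⟨μT, hμTC, hμTnear⟩ :=
        exists_mem_dist1_lt hCne (Q.S T ρm) (show (0:ℝ) < l * ε₁ by positivity)
      have hμTbound : τ.norm1 (Q.S T ρm - μT) ≤ 2 * (l * ε₁) := by
        have := hT₂ T hTT₂; linarith
      set η : H →L[ℂ] H := ((l⁻¹ : ℝ) : ℂ) • μT - (((1 - l)/l : ℝ) : ℂ) • σ with hηdef
      have hηinv : ∀ u : ℝ, 0 ≤ u → Q.S u η = η := by
        intro u hu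
        rw [hηdef, map_sub, map_smul, map_smul, hμTC.2 u hu, hσC.2 u hu]
      have hηtc : τ.IsTraceClass η :=
        sub_mem' (τ.smul_mem _ hμTC.1.1) (τ.smul_mem _ hσden.1)
      have hηsa : IsSelfAdjoint η :=
        (real_smul_isSelfAdjoint' hμTC.1.2.1.isSelfAdjoint _).sub
          (real_smul_isSelfAdjoint' hσden.2.1.isSelfAdjoint _)
      have hid : Q.S T ρ - η = ((l⁻¹ : ℝ) : ℂ) • (Q.S T ρm - μT) := by
        rw [hSρm T hT0, hηdef]
        match_scalars <;> (push_cast; field_simp)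
      have hnear : τ.norm1 (Q.S T ρ - η) ≤ 2 * ε₁ := by
        have hninv : ‖((l⁻¹ : ℝ) : ℂ)‖ = l⁻¹ := by
          rw [Complex.norm_real, Real.norm_eq_abs, abs_of_pos (inv_pos.mpr hl0)]
        rw [hid, τ.norm1_smul, hninv]
        calc l⁻¹ * τ.norm1 (Q.S T ρm - μT) ≤ l⁻¹ * (2 * (l * ε₁)) :=
              mul_le_mul_of_nonneg_left hμTbound (by positivity)
        _ = 2 * ε₁ := by field_simp
      have hSTden : τ.IsDensityOp (Q.S T ρ) := Q.S_mapsDensity T hT0 hρ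
      have hstay : ∀ u : ℝ, 0 ≤ u → τ.norm1 (Q.S (u + T) ρ - η) ≤ 2 * ε₁ := by
        intro u hu
        have hsg : Q.S (u + T) ρ = Q.S u (Q.S T ρ) := Q.S_semigroup T u hT0 hu ρ
        have heq : Q.S u (Q.S T ρ - η) = Q.S (u + T) ρ - η := by
          rw [map_sub, hηinv u hu, ← hsg]
        calc τ.norm1 (Q.S (u + T) ρ - η) = τ.norm1 (Q.S u (Q.S T ρ - η)) := by rw [heq]
        _ ≤ τ.norm1 (Q.S T ρ - η) := PredualQDS.norm1_S_le hu
              (sub_mem' (Q.S_mapsTraceClass T hT0 hρ.1) hηtc)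
              (hSTden.2.1.isSelfAdjoint.sub hηsa)
        _ ≤ 2 * ε₁ := hnear
      obtain ⟨ν, hνC, hνnear⟩ := exists_mem_dist1_lt hCne (Q.S T ρ) hε₁pos
      have hνden : τ.IsDensityOp ν := hνC.1
      have hgTa : τ.dist1 (Q.S T ρ) C ≤ a := hT₁ T hTT₁
      have hνbound : τ.norm1 (Q.S T ρ - ν) ≤ a + ε₁ := by linarith
      set ζ : H →L[ℂ] H := ((1 - l : ℝ) : ℂ) • ν + ((l : ℝ) : ℂ) • Q.S T ρ with hζdef
      have hζden : τ.IsDensityOp ζ := mix_isDensityOp hνden hSTden hl0.le hl1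
      have hζsub : ζ - ν = ((l : ℝ) : ℂ) • (Q.S T ρ - ν) := by
        rw [hζdef]
        match_scalars <;> (push_cast; ring)
      have hζdist : τ.dist1 ζ C < δ := by
        have h1 : τ.dist1 ζ C ≤ τ.norm1 (ζ - ν) := dist1_le_of_mem hνC _
        rw [hζsub, τ.norm1_smul, hnorml] at h1
        nlinarith [τ.norm1_nonneg (Q.S T ρ - ν)]
      have hζconv := hδ ζ hζden hζdist
      have hζev : ∀ᶠ u in atTop, τ.dist1 (Q.S u ζ) C < l * ε₁ := by
        have := Metric.tendsto_nhds.mp hζconv (l * ε₁) (by positivity)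
        filter_upwards [this] with u hu
        rw [Real.dist_eq, sub_zero] at hu
        exact (le_abs_self _).trans_lt hu
      obtain ⟨U₁, hU₁⟩ := eventually_atTop.mp hζev
      rw [eventually_atTop]
      refine ⟨max U₁ 0 + T, fun t ht => ?_⟩
      have hu0 : 0 ≤ t - T := by
        have := le_max_right U₁ (0:ℝ); linarith
      have huU : U₁ ≤ t - T := by
        have := le_max_left U₁ (0:ℝ); linarith
      have htuT : (t - T) + T = t := by ring
      have hSt : Q.S t ρ = Q.S (t - T) (Q.S T ρ) := by
        have h := Q.S_semigroup T (t - T) hT0 hu0 ρ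
        rwa [htuT] at h
      have hSuζ : Q.S (t - T) ζ = ((1 - l : ℝ) : ℂ) • ν + ((l : ℝ) : ℂ) • Q.S t ρ := by
        rw [hζdef, map_add, map_smul, map_smul, hνC.2 (t - T) hu0, ← hSt]
      obtain ⟨ξ, hξC, hξnear⟩ :=
        exists_mem_dist1_lt hCne (Q.S (t - T) ζ) (show (0:ℝ) < l * ε₁ by positivity)
      have hξbound : τ.norm1 (Q.S (t - T) ζ - ξ) ≤ 2 * (l * ε₁) := by
        have := hU₁ (t - T) huU; linarith
      have hmix2 : Q.S t ρ - Q.S (t - T) ζ = ((1 - l : ℝ) : ℂ) • (Q.S t ρ - ν) := by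
        rw [hSuζ]
        match_scalars <;> (push_cast; ring)
      have hb1 : τ.norm1 (Q.S t ρ - ν) ≤ a + 5 * ε₁ := by
        have t1 := norm1_triangle' (τ := τ) (Q.S t ρ) η ν
        have t2 := norm1_triangle' (τ := τ) η (Q.S T ρ) ν
        have e1 : τ.norm1 (Q.S t ρ - η) ≤ 2 * ε₁ := by
          have h := hstay (t - T) hu0
          rwa [htuT] at h
        have e2 : τ.norm1 (η - Q.S T ρ) ≤ 2 * ε₁ := by
          rw [norm1_sub_comm']; exact hnear
        linarith
      have d1 : τ.dist1 (Q.S t ρ) C ≤ τ.norm1 (Q.S t ρ - ξ) := dist1_le_of_mem hξC _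
      have d2 : τ.norm1 (Q.S t ρ - ξ) ≤
          τ.norm1 (Q.S t ρ - Q.S (t - T) ζ) + τ.norm1 (Q.S (t - T) ζ - ξ) :=
        norm1_triangle' _ _ _
      have d3 : τ.norm1 (Q.S t ρ - Q.S (t - T) ζ) = (1 - l) * τ.norm1 (Q.S t ρ - ν) := by
        rw [hmix2, τ.norm1_smul, Complex.norm_real, Real.norm_eq_abs,
          abs_of_nonneg (show (0:ℝ) ≤ 1 - l by linarith)]
      have d4 : (1 - l) * τ.norm1 (Q.S t ρ - ν) ≤ (1 - l) * (a + 5 * ε₁) :=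
        mul_le_mul_of_nonneg_left hb1 (by linarith)
      have hfin : (1 - l) * (a + 5 * ε₁) + 2 * (l * ε₁) ≤ (1 - l) * a + l * ε / 2 := by
        have h7 : 7 * ε₁ = l * ε / 2 := by rw [hε₁def]; ring
        nlinarith [hε₁pos.le, hl0.le]
      linarith
    -- iteration
    have base : ∀ᶠ t in atTop, τ.dist1 (Q.S t ρ) C ≤ 2 := by
      rw [eventually_atTop]
      refine ⟨0, fun t ht => ?_⟩
      have h1 : τ.dist1 (Q.S t ρ) C ≤ τ.norm1 (Q.S t ρ - σ) := dist1_le_of_mem hσC _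
      have h2 := norm1_sub_le' (τ := τ) (Q.S t ρ) σ
      rw [density_norm1 (Q.S_mapsDensity t ht hρ), density_norm1 hσden] at h2
      linarith
    have iter : ∀ n : ℕ, ∀ᶠ t in atTop, τ.dist1 (Q.S t ρ) C ≤ (1 - l) ^ n * 2 + ε / 2 := by
      intro n
      induction n with
      | zero =>
          filter_upwards [base] with t ht
          rw [pow_zero]
          linarith
      | succ n ih =>
          have hp0 : (0:ℝ) ≤ (1 - l) ^ n := pow_nonneg (by linarith) n
          have hb0 : 0 ≤ (1 - l) ^ n * 2 + ε / 2 := by positivity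
          have hp1 : (1 - l) ^ n ≤ 1 := pow_le_one₀ (by linarith) (by linarith)
          have hb3 : (1 - l) ^ n * 2 + ε / 2 ≤ 3 := by linarith
          filter_upwards [key _ hb0 hb3 ih] with t ht
          have hps : (1 - l) ^ (n + 1) = (1 - l) ^ n * (1 - l) := pow_succ _ _
          calc τ.dist1 (Q.S t ρ) C ≤ (1 - l) * ((1 - l) ^ n * 2 + ε / 2) + l * ε / 2 := ht
          _ = (1 - l) ^ (n + 1) * 2 + ε / 2 := by rw [hps]; ring
    obtain ⟨n, hn⟩ := exists_pow_lt_of_lt_one (show (0:ℝ) < ε / 4 by linarith)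
      (show 1 - l < 1 by linarith)
    filter_upwards [iter n] with t ht
    have hp0 : (0:ℝ) ≤ (1 - l) ^ n := pow_nonneg (by linarith) n
    linarith
end
end

section
/- Let (S_t) be a predual quantum dynamical semigroup whose dual maps T_t are each surjective onto B(H), and let C* be its set of invariant density operators. Then C* is two-side invariant: if S_t(ρ) ∈ C* for some ρ ∈ S(H) and some t ≥ 0, then S_{t'}(ρ) ∈ C* for every t' ≥ 0. -/
open Filter ContinuousLinearMap
open scoped Topology

noncomputable section

variable {H : Type*} [NormedAddCommGroup H] [InnerProductSpace ℂ H] [CompleteSpace H]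
  [TopologicalSpace.SeparableSpace H]

open TraceClassStructure PredualQDS


section InjectivityAux

set_option maxHeartbeats 1000000
set_option synthInstance.maxHeartbeats 1000000

private lemma norm_sqrt_apply (Z : H →L[ℂ] H) (x : H) :
    ‖CFC.sqrt (star Z * Z) x‖ = ‖Z x‖ := by
  set R := CFC.sqrt (star Z * Z) with hRdef
  have hRsa : IsSelfAdjoint R := IsSelfAdjoint.of_nonneg (CFC.sqrt_nonneg _)
  have hR2 : R * R = star Z * Z := CFC.sqrt_mul_sqrt_self _ (star_mul_self_nonneg Z)
  have hRadj : ContinuousLinearMap.adjoint R = R :=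
    ContinuousLinearMap.isSelfAdjoint_iff'.mp hRsa
  have h1 : (inner ℂ (R x) (R x) : ℂ) = inner ℂ (Z x) (Z x) := by
    calc (inner ℂ (R x) (R x) : ℂ)
        = inner ℂ x ((ContinuousLinearMap.adjoint R) (R x)) :=
          (ContinuousLinearMap.adjoint_inner_right R x (R x)).symm
      _ = inner ℂ x ((R * R) x) := by rw [hRadj]; rfl
      _ = inner ℂ x ((ContinuousLinearMap.adjoint Z) (Z x)) := by
          rw [hR2, ← ContinuousLinearMap.star_eq_adjoint]; rfl
      _ = inner ℂ (Z x) (Z x) := ContinuousLinearMap.adjoint_inner_right Z x (Z x)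
  have h3 : ‖R x‖ ^ 2 = ‖Z x‖ ^ 2 := by
    rw [← inner_self_eq_norm_sq (𝕜 := ℂ), ← inner_self_eq_norm_sq (𝕜 := ℂ), h1]
  nlinarith [norm_nonneg (R x), norm_nonneg (Z x), sq_nonneg (‖R x‖ - ‖Z x‖),
    sq_nonneg (‖R x‖ + ‖Z x‖)]

private lemma exists_mul_eq_sqrt (Z : H →L[ℂ] H) (hsa : IsSelfAdjoint Z) :
    ∃ A : H →L[ℂ] H, Z * A = CFC.sqrt (star Z * Z) := by
  set R := CFC.sqrt (star Z * Z) with hRdef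
  have hnorm : ∀ x, ‖R x‖ = ‖Z x‖ := norm_sqrt_apply Z
  have hRsa : IsSelfAdjoint R := IsSelfAdjoint.of_nonneg (CFC.sqrt_nonneg _)
  have hwd : ∀ x y : H, Z x = Z y → R x = R y := by
    intro x y hxy
    have h0 : ‖R x - R y‖ = 0 := by
      rw [← map_sub, hnorm, map_sub, hxy, sub_self, norm_zero]
    rw [← sub_eq_zero]
    exact norm_eq_zero.mp h0
  set V : Submodule ℂ H := LinearMap.range Z.toLinearMap with hV
  have pick : ∀ v : V, ∃ x : H, Z x = (v : H) := fun v => LinearMap.mem_range.mp v.2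
  let p : V → H := fun v => (pick v).choose
  have hp : ∀ v : V, Z (p v) = (v : H) := fun v => (pick v).choose_spec
  let g0 : V →ₗ[ℂ] H :=
    { toFun := fun v => R (p v)
      map_add' := by
        intro v w
        rw [← map_add]
        apply hwd
        rw [hp, map_add, hp, hp, Submodule.coe_add]
      map_smul' := by
        intro c v
        simp only [RingHom.id_apply]
        rw [← map_smul]
        apply hwd
        rw [hp, map_smul, hp, Submodule.coe_smul] }
  have hgnorm : ∀ v : V, ‖g0 v‖ = ‖v‖ := by
    intro v
    show ‖R (p v)‖ = ‖v‖
    rw [hnorm, hp]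
    rfl
  let gi : V →ₗᵢ[ℂ] H := ⟨g0, hgnorm⟩
  set K : Submodule ℂ H := V.topologicalClosure with hK
  let incl : V →ₗᵢ[ℂ] K :=
    ⟨Submodule.inclusion V.le_topologicalClosure, fun v => rfl⟩
  let e : V →L[ℂ] K := incl.toContinuousLinearMap
  have h_e : IsUniformInducing e := incl.isometry.isUniformInducing
  have h_dense : DenseRange e := by
    refine Topology.IsInducing.subtypeVal.dense_iff.2 fun x => ?_
    have hx : (x : H) ∈ closure (V : Set H) := by
      rw [← Submodule.topologicalClosure_coe]
      exact x.prop
    convert hx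
    rw [← Set.range_comp]
    exact Set.ext fun y =>
      ⟨by rintro ⟨v, rfl⟩; exact v.prop, fun hy => ⟨⟨y, hy⟩, rfl⟩⟩
  let B0 : K →L[ℂ] H := gi.toContinuousLinearMap.extend e
  let B : H →L[ℂ] H := B0.comp (K.orthogonalProjectionOnto)
  have hBZ : ∀ x : H, B (Z x) = R x := by
    intro x
    have hZxV : Z x ∈ V := ⟨x, rfl⟩
    have hZxK : Z x ∈ K := V.le_topologicalClosure hZxV
    have hproj : K.orthogonalProjectionOnto (Z x) = ⟨Z x, hZxK⟩ :=
      Subtype.ext (Submodule.starProjection_eq_self_iff.mpr hZxK)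
    show B0 (K.orthogonalProjectionOnto (Z x)) = R x
    rw [hproj]
    have he : (⟨Z x, hZxK⟩ : K) = e ⟨Z x, hZxV⟩ := rfl
    rw [he]
    show gi.toContinuousLinearMap.extend e (e ⟨Z x, hZxV⟩) = R x
    rw [ContinuousLinearMap.extend_eq _ h_dense h_e]
    show R (p ⟨Z x, hZxV⟩) = R x
    exact hwd _ _ (by rw [hp])
  have hBZ' : B.comp Z = R := ContinuousLinearMap.ext hBZ
  refine ⟨ContinuousLinearMap.adjoint B, ?_⟩
  have hZadj : ContinuousLinearMap.adjoint Z = Z :=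
    ContinuousLinearMap.isSelfAdjoint_iff'.mp hsa
  have hRadj : ContinuousLinearMap.adjoint R = R :=
    ContinuousLinearMap.isSelfAdjoint_iff'.mp hRsa
  have h2 : ContinuousLinearMap.adjoint Z ∘L ContinuousLinearMap.adjoint B = R := by
    rw [← ContinuousLinearMap.adjoint_comp, hBZ', hRadj]
  rw [hZadj] at h2
  exact h2

private lemma eq_zero_of_trace_mul_eq_zero (τ : TraceClassStructure H) {Z : H →L[ℂ] H}
    (htc : τ.IsTraceClass Z) (hsa : IsSelfAdjoint Z)
    (h : ∀ A : H →L[ℂ] H, τ.trace (Z * A) = 0) : Z = 0 := by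
  obtain ⟨A, hA⟩ := exists_mul_eq_sqrt Z hsa
  have h1 : τ.norm1 Z = 0 := by
    rw [τ.norm1_def htc, ← hA, h A]
    simp
  exact (τ.norm1_eq_zero htc).mp h1

end InjectivityAux

theorem stmt10 (τ : TraceClassStructure H) (Q : PredualQDS H τ)
    (hsurj : ∀ t : ℝ, 0 ≤ t → Function.Surjective (Q.T t)) :
    Q.IsTwoSideInvariantSet Q.invariantDensityOps := by
  intro ρ hρ t ht hmem t' ht'
  obtain ⟨hdens, hinv⟩ := hmem
  have habs : ∀ u : ℝ, 0 ≤ u → Q.S (u + t) ρ = Q.S t ρ := by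
    intro u hu
    rw [Q.S_semigroup t u ht hu ρ]
    exact hinv u hu
  have claim : ∀ r : ℝ, 0 ≤ r → Q.S (r + t') ρ = Q.S t' ρ := by
    intro s hs
    rcases le_or_gt t t' with hset | hset
    · have h1 : Q.S t' ρ = Q.S t ρ := by
        have := habs (t' - t) (by linarith)
        rwa [sub_add_cancel] at this
      have h2 : Q.S (s + t') ρ = Q.S t ρ := by
        have := habs (s + t' - t) (by linarith)
        rwa [sub_add_cancel] at this
      rw [h1, h2]
    · set u : ℝ := t - t' with hu
      have hu0 : (0 : ℝ) ≤ u := by rw [hu]; linarith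
      have hst : (0 : ℝ) ≤ s + t' := by linarith
      have hX : τ.IsDensityOp (Q.S (s + t') ρ) := Q.S_mapsDensity _ hst hρ
      have hY : τ.IsDensityOp (Q.S t' ρ) := Q.S_mapsDensity _ ht' hρ
      have hs1 : Q.S u (Q.S (s + t') ρ) = Q.S t ρ := by
        rw [← Q.S_semigroup (s + t') u hst hu0 ρ]
        have h' : u + (s + t') = s + t := by rw [hu]; ring
        rw [h', Q.S_semigroup t s ht hs ρ]
        exact hinv s hs
      have hs2 : Q.S u (Q.S t' ρ) = Q.S t ρ := by
        rw [← Q.S_semigroup t' u ht' hu0 ρ]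
        have h' : u + t' = t := by rw [hu]; ring
        rw [h']
      have h0 : ∀ A : H →L[ℂ] H, τ.trace ((Q.S (s + t') ρ - Q.S t' ρ) * A) = 0 := by
        intro A
        obtain ⟨B, hB⟩ := hsurj u hu0 A
        have e1 : τ.trace (Q.S (s + t') ρ * A) = τ.trace (Q.S t ρ * B) := by
          rw [← hB, ← Q.duality u hu0 _ B hX.1, hs1]
        have e2 : τ.trace (Q.S t' ρ * A) = τ.trace (Q.S t ρ * B) := by
          rw [← hB, ← Q.duality u hu0 _ B hY.1, hs2]
        rw [sub_mul, map_sub, e1, e2, sub_self]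
      have hZtc : τ.IsTraceClass (Q.S (s + t') ρ - Q.S t' ρ) := by
        have h1 := τ.add_mem hX.1 (τ.smul_mem (-1) hY.1)
        rwa [neg_one_smul, ← sub_eq_add_neg] at h1
      have hZsa : IsSelfAdjoint (Q.S (s + t') ρ - Q.S t' ρ) :=
        hX.2.1.isSelfAdjoint.sub hY.2.1.isSelfAdjoint
      have hZ0 : Q.S (s + t') ρ - Q.S t' ρ = 0 :=
        eq_zero_of_trace_mul_eq_zero τ hZtc hZsa h0
      exact sub_eq_zero.mp hZ0
  refine ⟨Q.S_mapsDensity t' ht' hρ, fun s hs => ?_⟩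
  rw [← Q.S_semigroup t' s ht' hs ρ]
  exact claim s hs
end
end
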